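/- In a finite MDP with bisimulation metric d̃ as the fixed point of F(d)(s_i,s_j) = max_a [(1−c)|R^a_{s_i} − R^a_{s_j}| + c·W₁(d)(P^a_{s_i}, P^a_{s_j})], c ∈ (0,1), if d̃(s_i, s_j) = 0, then for every action a and every subset G of the zero-distance equivalence class partition, P(G|s_i,a) = P(G|s_j,a). That is, the kernel of d̃ is a bisimulation relation. -/

import Mathlib

/-!
A fixed point of the bisimulation operator vanishing at `(sᵢ, sⱼ)` forces
`W₁(d̃)(P^a_{sᵢ}, P^a_{sⱼ}) = 0` for every action `a`, since every term of the supremum is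
nonnegative and `c > 0`. By the triangle inequality, the indicator of the zero-distance class
of `z`, scaled by the least positive distance `δ` from `z`, is `1`-Lipschitz for `d̃`; by the
easy half of Kantorovich–Rubinstein duality `δ · |p(G) - q(G)| ≤ W₁(d̃)(p, q) = 0`.
-/

open Finset

structure IsPseudometric {S : Type*} (d : S → S → ℝ) : Prop where
  nonneg : ∀ x y, 0 ≤ d x y
  refl : ∀ x, d x x = 0
  symm : ∀ x y, d x y = d y x
  triangle : ∀ x y z, d x z ≤ d x y + d y z

def IsProb {S : Type*} [Fintype S] (p : S → ℝ) : Prop :=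
  (∀ s, 0 ≤ p s) ∧ ∑ s, p s = 1

def IsCoupling {S : Type*} [Fintype S] (γ : S → S → ℝ) (p q : S → ℝ) : Prop :=
  (∀ x y, 0 ≤ γ x y) ∧ (∀ x, ∑ y, γ x y = p x) ∧ (∀ y, ∑ x, γ x y = q y)

noncomputable def W1 {S : Type*} [Fintype S] (d : S → S → ℝ) (p q : S → ℝ) : ℝ :=
  sInf { r | ∃ γ : S → S → ℝ, IsCoupling γ p q ∧ r = ∑ x, ∑ y, d x y * γ x y }

noncomputable def bisimF {S : Type*} [Fintype S] (R : S → ℝ) (P : S → S → ℝ) (c : ℝ)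
    (d : S → S → ℝ) : S → S → ℝ :=
  fun x y => (1 - c) * |R x - R y| + c * W1 d (P x) (P y)

noncomputable def bisimFA {S A : Type*} [Fintype S] [Fintype A] [Nonempty A]
    (R : S → A → ℝ) (P : S → A → S → ℝ) (c : ℝ) (d : S → S → ℝ) : S → S → ℝ :=
  fun x y => ⨆ a : A, ((1 - c) * |R x a - R y a| + c * W1 d (P x a) (P y a))

section Wasserstein

variable {S : Type*} [Fintype S]

lemma IsProb.isCoupling_mul {p q : S → ℝ} (hp : IsProb p) (hq : IsProb q) :
    IsCoupling (fun x y => p x * q y) p q := by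
  refine ⟨fun x y => mul_nonneg (hp.1 x) (hq.1 y), fun x => ?_, fun y => ?_⟩
  · rw [← mul_sum, hq.2, mul_one]
  · rw [← sum_mul, hp.2, one_mul]

lemma W1_nonneg {d : S → S → ℝ} (hd : ∀ x y, 0 ≤ d x y) (p q : S → ℝ) : 0 ≤ W1 d p q :=
  Real.sInf_nonneg fun _ ⟨_, hγ, hr⟩ => hr ▸
    sum_nonneg fun x _ => sum_nonneg fun y _ => mul_nonneg (hd x y) (hγ.1 x y)

lemma abs_sum_mul_sub_sum_mul_le_W1 {d : S → S → ℝ} {p q : S → ℝ} (hp : IsProb p)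
    (hq : IsProb q) {f : S → ℝ} (hf : ∀ x y, |f x - f y| ≤ d x y) :
    |∑ x, f x * p x - ∑ x, f x * q x| ≤ W1 d p q := by
  refine le_csInf ⟨_, _, hp.isCoupling_mul hq, rfl⟩ ?_
  rintro _ ⟨γ, ⟨hγ, hγp, hγq⟩, rfl⟩
  have hdiff : ∑ x, f x * p x - ∑ x, f x * q x = ∑ x, ∑ y, (f x - f y) * γ x y := by
    simp only [← hγp, ← hγq, mul_sum, sub_mul, sum_sub_distrib]
    rw [sum_comm (f := fun y x => f y * γ x y)]
  calc |∑ x, f x * p x - ∑ x, f x * q x|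
      = |∑ x, ∑ y, (f x - f y) * γ x y| := by rw [hdiff]
    _ ≤ ∑ x, ∑ y, |(f x - f y) * γ x y| :=
      (abs_sum_le_sum_abs _ _).trans (sum_le_sum fun x _ => abs_sum_le_sum_abs _ _)
    _ ≤ ∑ x, ∑ y, d x y * γ x y := by
      gcongr with x _ y _
      rw [abs_mul, abs_of_nonneg (hγ x y)]
      exact mul_le_mul_of_nonneg_right (hf x y) (hγ x y)

lemma exists_pos_le_of_ne_zero {g : S → ℝ} (hg : ∀ y, 0 ≤ g y) :
    ∃ δ > 0, ∀ y, g y ≠ 0 → δ ≤ g y := by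
  set T := insert 1 ((univ.filter (g · ≠ 0)).image g)
  refine ⟨T.min' (insert_nonempty _ _), ?_, fun y hy => T.min'_le _ ?_⟩
  · rw [gt_iff_lt, lt_min'_iff]
    simp only [T, mem_insert, mem_image, mem_filter, mem_univ, true_and]
    rintro _ (rfl | ⟨y, hy, rfl⟩)
    exacts [one_pos, (hg y).lt_of_ne' hy]
  · exact mem_insert_of_mem (mem_image_of_mem g (by simpa using hy))

lemma sum_filter_eq_of_W1_eq_zero {d : S → S → ℝ} (hd : IsPseudometric d) {p q : S → ℝ}
    (hp : IsProb p) (hq : IsProb q) (hW : W1 d p q = 0) (z : S) :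
    ∑ x ∈ univ.filter (fun x => d z x = 0), p x =
      ∑ x ∈ univ.filter (fun x => d z x = 0), q x := by
  obtain ⟨δ, hδ, hsep⟩ := exists_pos_le_of_ne_zero (hd.nonneg z)
  have hcross : ∀ x y, d z x = 0 → d z y ≠ 0 → δ ≤ d x y := fun x y hx hy =>
    calc δ ≤ d z y := hsep y hy
      _ ≤ d z x + d x y := hd.triangle z x y
      _ = d x y := by rw [hx, zero_add]
  have hf : ∀ x y, |(if d z x = 0 then δ else 0) - (if d z y = 0 then δ else 0)| ≤ d x y := by
    intro x y
    split_ifs with hx hy hy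
    · simpa using hd.nonneg x y
    · simpa [abs_of_pos hδ] using hcross x y hx hy
    · simpa [abs_of_pos hδ, hd.symm x y] using hcross y x hy hx
    · simpa using hd.nonneg x y
  have hbound := abs_sum_mul_sub_sum_mul_le_W1 hp hq hf
  simp only [ite_mul, zero_mul, ← sum_filter, ← mul_sum, ← mul_sub, hW, abs_mul,
    abs_of_pos hδ] at hbound
  exact sub_eq_zero.1 (abs_nonpos_iff.1 (nonpos_of_mul_nonpos_right hbound hδ))

end Wasserstein

lemma W1_eq_zero_of_bisimFA_eq_zero {S A : Type*} [Fintype S] [Fintype A] [Nonempty A]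
    {R : S → A → ℝ} {P : S → A → S → ℝ} {c : ℝ} (hc0 : 0 < c) (hc1 : c ≤ 1)
    {d : S → S → ℝ} (hd : ∀ x y, 0 ≤ d x y) {x y : S} (h : bisimFA R P c d x y = 0) (a : A) :
    W1 d (P x a) (P y a) = 0 := by
  have hreward : 0 ≤ (1 - c) * |R x a - R y a| := mul_nonneg (by linarith) (abs_nonneg _)
  have hW := W1_nonneg hd (P x a) (P y a)
  have hterm : (1 - c) * |R x a - R y a| + c * W1 d (P x a) (P y a) ≤ 0 := by
    rw [← h]
    exact le_ciSup (f := fun a => (1 - c) * |R x a - R y a| + c * W1 d (P x a) (P y a))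
      (Set.finite_range _).bddAbove a
  nlinarith

/-- the kernel of the bisimulation metric is a bisimulation relation:
states at distance zero assign equal probability to every zero-distance equivalence
class, for every action. -/
theorem stmt_14 {S A : Type*} [Fintype S] [Fintype A] [Nonempty A]
    (R : S → A → ℝ) (P : S → A → S → ℝ) (hP : ∀ s a, IsProb (P s a))
    (c : ℝ) (hc0 : 0 < c) (hc1 : c < 1)
    (dt : S → S → ℝ) (hdt : IsPseudometric dt) (hfix : bisimFA R P c dt = dt)
    (s_i s_j : S) (h0 : dt s_i s_j = 0) :
    ∀ (a : A) (z : S),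
      ∑ s' ∈ univ.filter (fun s' => dt z s' = 0), P s_i a s' =
        ∑ s' ∈ univ.filter (fun s' => dt z s' = 0), P s_j a s' := by
  intro a z
  have hbisim : bisimFA R P c dt s_i s_j = 0 := by rw [hfix, h0]
  exact sum_filter_eq_of_W1_eq_zero hdt (hP s_i a) (hP s_j a)
    (W1_eq_zero_of_bisimFA_eq_zero hc0 hc1.le hdt.nonneg hbisim a) z
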